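/- Let (K,𝔐) be an adelic field satisfying the product formula, m = (m_0,…,m_r) ∈ M^{r+1}, α = (α_0,…,α_r) ∈ (K^×)^{r+1}, and X a projective toric variety compatible with Δ = conv(m_0,…,m_r). Let D̄ = D̄_{m,α} be the toric metrized divisor on X whose v-adic metric is the homothecy by |α_0|_v^{−1} of the inverse image under the monomial map φ_{m,α} of the metric on the hyperplane divisor of ℙ^r_K given by the ℓ¹-norm at Archimedean places and the canonical metric at non-Archimedean places. Then D̄ is semipositive and generated by small sections; its v-adic metric satisfies ‖s_D(p)‖_v = (∑_{j=0}^r |α_j χ^{m_j}(p)|_v)^{−1} if v is Archimedean and (max_{0≤j≤r} |α_j χ^{m_j}(p)|_v)^{−1} if v is non-Archimedean; its v-adic metric function is ψ_{D̄,v}(u) = −log(∑_j |α_j|_v e^{−⟨m_j,u⟩}) for Archimedean v and min_j(⟨m_j,u⟩ − log|α_j|_v) for non-Archimedean v; and its v-adic roof function at x ∈ Δ equals max_λ ∑_j λ_j log(|α_j|_v/λ_j) for Archimedean v and max_λ ∑_j λ_j log|α_j|_v for non-Archimedean v, the maximum over λ ∈ ℝ_{≥0}^{r+1} with ∑_j λ_j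 = 1 and ∑_j λ_j m_j = x. -/

import Mathlib

open scoped BigOperators Pointwise TensorProduct Classical

noncomputable section

/-! ## Adelic fields -/

/-- An absolute value is Archimedean if it is not non-Archimedean. -/
def IsArchPlace {K : Type} [CommRing K] (v : AbsoluteValue K ℝ) : Prop :=
  ¬ IsNonarchimedean (fun x : K => v x)

/-- An absolute value associated to a nontrivial discrete valuation. -/
def IsDiscretePlace {K : Type} [CommRing K] (v : AbsoluteValue K ℝ) : Prop :=
  IsNonarchimedean (fun x : K => v x) ∧ (∃ x : K, x ≠ 0 ∧ v x ≠ 1) ∧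
    ∃ c : ℝ, 1 < c ∧ ∀ x : K, x ≠ 0 → ∃ k : ℤ, v x = c ^ k

/-- An adelic field structure on `K`: a set of places, each consisting of an absolute
value that is either Archimedean or associated to a nontrivial discrete valuation,
together with a positive weight, such that every nonzero element has absolute value `1`
at all but finitely many places. -/
structure AdelicField (K : Type) [CommRing K] : Type 1 where
  places : Type
  absv : places → AbsoluteValue K ℝ
  weight : places → ℝ
  weight_pos : ∀ v, 0 < weight v
  arch_or_discrete : ∀ v, IsArchPlace (absv v) ∨ IsDiscretePlace (absv v)
  finite_ne_one : ∀ x : K, x ≠ 0 → {v : places | absv v x ≠ 1}.Finite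

/-- The product formula: `∏_v |x|_v^{n_v} = 1` for all nonzero `x`. -/
def AdelicField.ProductFormula {K : Type} [CommRing K] (A : AdelicField K) : Prop :=
  ∀ x : K, x ≠ 0 → (∏ᶠ v : A.places, A.absv v x ^ A.weight v) = 1

/-- The place `v` is non-Archimedean. -/
def AdelicField.IsNonarch {K : Type} [CommRing K] (A : AdelicField K) (v : A.places) : Prop :=
  IsNonarchimedean (fun x : K => A.absv v x)

/-! ## Mixed volumes and mixed integrals -/

/-- Minkowski sum of a finite family of subsets of `ℝ^n`. -/
def minkSum {n : ℕ} {ι : Type} (S : Finset ι) (Δ : ι → Set (Fin n → ℝ)) : Set (Fin n → ℝ) :=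
  ∑ i ∈ S, Δ i

/-- The mixed volume of a family of convex bodies in `ℝ^n`, normalized so that the
lattice `ℤ^n` has covolume `1` (inclusion-exclusion over Minkowski sums). -/
def mixedVolume {n : ℕ} {ι : Type} [Fintype ι] (Δ : ι → Set (Fin n → ℝ)) : ℝ :=
  ∑ S ∈ (Finset.univ : Finset ι).powerset,
    if S.Nonempty then
      (-1 : ℝ) ^ (Fintype.card ι - S.card) * (MeasureTheory.volume (minkSum S Δ)).toReal
    else 0

/-- The sup-convolution of a finite family of functions on convex bodies. -/
def supConvolution {n : ℕ} {ι : Type} (S : Finset ι) (Δ : ι → Set (Fin n → ℝ))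
    (g : ι → (Fin n → ℝ) → ℝ) (x : Fin n → ℝ) : ℝ :=
  sSup {t : ℝ | ∃ c : ι → (Fin n → ℝ), (∀ i ∈ S, c i ∈ Δ i) ∧
    (∑ i ∈ S, c i) = x ∧ t = ∑ i ∈ S, g i (c i)}

/-- The mixed integral of a family of concave functions `g i : Δ i → ℝ`. -/
def mixedIntegral {n : ℕ} {ι : Type} [Fintype ι] (Δ : ι → Set (Fin n → ℝ))
    (g : ι → (Fin n → ℝ) → ℝ) : ℝ :=
  ∑ S ∈ (Finset.univ : Finset ι).powerset,
    if S.Nonempty then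
      (-1 : ℝ) ^ (Fintype.card ι - S.card) *
        ∫ x in minkSum S Δ, supConvolution S Δ g x
    else 0

/-! ## Laurent polynomials and Newton polytopes -/

/-- The algebra `K[M]` of Laurent polynomials in `n` variables, i.e. the group
algebra of the lattice `M = ℤ^n`. -/
abbrev Laurent (K : Type) [CommRing K] (n : ℕ) : Type := AddMonoidAlgebra K (Fin n → ℤ)

/-- A lattice point viewed inside `M_ℝ = ℝ^n`. -/
def toRealVec {n : ℕ} (m : Fin n → ℤ) : Fin n → ℝ := fun i => (m i : ℝ)

/-- The Newton polytope of a Laurent polynomial: the convex hull of its support. -/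
def newtonPolytope {K : Type} [CommRing K] {n : ℕ} (f : Laurent K n) : Set (Fin n → ℝ) :=
  convexHull ℝ (toRealVec '' (f.coeff.support : Set (Fin n → ℤ)))

/-! ## The 0-cycle of isolated zeros in the torus -/

/-- The set of isolated closed points of the subscheme of the torus
`𝕋 = Spec K[M]` cut out by the family `f`. -/
def isolatedZeros {K : Type} [CommRing K] {n : ℕ} (f : Fin n → Laurent K n) :
    Set (PrimeSpectrum (Laurent K n)) :=
  {x | x.asIdeal.IsMaximal ∧ x ∈ PrimeSpectrum.zeroLocus (Set.range f) ∧
    ∃ U : Set (PrimeSpectrum (Laurent K n)), IsOpen U ∧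
      U ∩ PrimeSpectrum.zeroLocus (Set.range f) = {x}}

/-- The intersection multiplicity `dim_K (R_𝔪 / I R_𝔪)` of an ideal `I` at a
(maximal) prime `𝔪`. -/
def localMult (K : Type) [Field K] {R : Type} [CommRing R] [Algebra K R]
    (I : Ideal R) (m : Ideal R) : ℕ :=
  if h : m.IsPrime then
    letI := h
    letI : Algebra K (Localization m.primeCompl) :=
      ((algebraMap R (Localization m.primeCompl)).comp (algebraMap K R)).toAlgebra
    Module.finrank K
      ((Localization m.primeCompl) ⧸ I.map (algebraMap R (Localization m.primeCompl)))
  else 0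


/-! ## Lengths -/

/-- The `v`-adic (logarithmic) length of a vector of coefficients: the logarithm of the
sum (Archimedean `v`) or of the maximum (non-Archimedean `v`) of the `v`-adic absolute
values of the entries. -/
def placeLen {K : Type} [CommRing K] (A : AdelicField K) (v : A.places)
    {I : Type} (T : Finset I) (c : I → K) : ℝ :=
  if A.IsNonarch v then
    Real.log (sSup ((fun i => A.absv v (c i)) '' (T : Set I)))
  else Real.log (∑ i ∈ T, A.absv v (c i))

/-- The (logarithmic) length `ℓ = ∑_v n_v ℓ_v` of a vector of coefficients. -/
def len {K : Type} [CommRing K] (A : AdelicField K) {I : Type} (T : Finset I)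
    (c : I → K) : ℝ :=
  ∑ᶠ v : A.places, A.weight v * placeLen A v T c

/-- The length of a Laurent polynomial: the length of its coefficient vector. -/
def lenLaurent {K : Type} [CommRing K] {n : ℕ} (A : AdelicField K) (f : Laurent K n) : ℝ :=
  len A f.coeff.support (fun m => f.coeff m)

/-- The length of a multivariate polynomial: the length of its coefficient vector. -/
def lenMvPoly {K : Type} [CommRing K] {σ : Type} (A : AdelicField K)
    (g : MvPolynomial σ K) : ℝ :=
  len A g.support (fun d => MvPolynomial.coeff d g)

/-! ## Concave metric data attached to a Laurent polynomial -/

/-- The concave function `ψ_{f,v}` on `N_ℝ` attached to a Laurent polynomial `f` and a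
place `v`:  `-log ∑_m |a_m|_v e^{-⟨m,u⟩}` (Archimedean `v`) resp.
`-log max_m |a_m|_v e^{-⟨m,u⟩}` (non-Archimedean `v`). -/
def psiOf {K : Type} [CommRing K] {n : ℕ} (A : AdelicField K) (v : A.places)
    (f : Laurent K n) (u : Fin n → ℝ) : ℝ :=
  if A.IsNonarch v then
    - Real.log (sSup ((fun m : Fin n → ℤ =>
        A.absv v (f.coeff m) * Real.exp (-(∑ i, (m i : ℝ) * u i))) '' (f.coeff.support : Set _)))
  else
    - Real.log (∑ m ∈ f.coeff.support, A.absv v (f.coeff m) * Real.exp (-(∑ i, (m i : ℝ) * u i)))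

/-- The Legendre-Fenchel dual `ψ^∨(x) = inf_u (⟨x,u⟩ - ψ(u))` of a concave function on
`N_ℝ`; for the functions considered here it is concave with domain the corresponding
polytope. -/
def legendreDualFn {n : ℕ} (ψ : (Fin n → ℝ) → ℝ) (x : Fin n → ℝ) : ℝ :=
  sInf (Set.range fun u : Fin n → ℝ => (∑ i, x i * u i) - ψ u)

/-- The metric function `ψ(u) = inf_{x ∈ Δ} (⟨x,u⟩ - θ(x))` associated to a roof
function `θ` on a polytope `Δ` (Legendre-Fenchel duality). -/
def metricFnOfRoof {n : ℕ} (Δ : Set (Fin n → ℝ)) (θ : (Fin n → ℝ) → ℝ)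
    (u : Fin n → ℝ) : ℝ :=
  sInf ((fun x => (∑ i, x i * u i) - θ x) '' Δ)

/-! ## Completions and the Artinian decomposition `F ⊗_K K_v ≅ ⊕_w E_w` -/

/-- Completeness of a (commutative) ring with respect to an absolute value:
every Cauchy sequence converges. -/
def IsCauchyComplete {L : Type} [CommRing L] (ab : AbsoluteValue L ℝ) : Prop :=
  ∀ s : ℕ → L,
    (∀ ε : ℝ, 0 < ε → ∃ N : ℕ, ∀ p q : ℕ, N ≤ p → N ≤ q → ab (s p - s q) < ε) →
    ∃ y : L, ∀ ε : ℝ, 0 < ε → ∃ N : ℕ, ∀ p : ℕ, N ≤ p → ab (s p - y) < ε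

/-- Density of the image of `ι : K →+* L` with respect to an absolute value on `L`. -/
def IsDenseEmbRange {K L : Type} [CommRing K] [CommRing L] (f : K →+* L)
    (ab : AbsoluteValue L ℝ) : Prop :=
  ∀ (y : L) (ε : ℝ), 0 < ε → ∃ x : K, ab (y - f x) < ε

attribute [local instance] Algebra.TensorProduct.rightAlgebra

/-- A decomposition `F ⊗_K K_v ≅ ⊕_w E_w` of the base change of a finite extension
`F` of `K` to the completion `K_v`, into local Artinian `K_v`-algebras indexed by the
absolute values `w` of `F` extending `v`, where the residue field of `E_w` is the
completion `F_w`. -/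
structure ArtinDecomposition (K F Kv : Type) [Field K] [CommRing F] [Algebra K F]
    [Field Kv] [Algebra K Kv] {W : Type} (wabs : W → AbsoluteValue F ℝ) : Type 1 where
  E : W → Type
  [ringE : ∀ w, CommRing (E w)]
  [algE : ∀ w, Algebra Kv (E w)]
  [localE : ∀ w, IsLocalRing (E w)]
  artinianE : ∀ w, IsArtinianRing (E w)
  [finW : Fintype W]
  equiv : Nonempty ((F ⊗[K] Kv) ≃ₐ[Kv] ((w : W) → E w))
  residue : ∀ (w : W) (Fw : Type) [Field Fw] (emb : F →+* Fw) (ab : AbsoluteValue Fw ℝ),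
    (∀ x : F, ab (emb x) = wabs w x) → IsDenseEmbRange emb ab → IsCauchyComplete ab →
    Nonempty (IsLocalRing.ResidueField (E w) ≃+* Fw)

attribute [instance] ArtinDecomposition.ringE ArtinDecomposition.algE
  ArtinDecomposition.localE

/-! ## Adelic field extensions -/

/-- An adelic field extension `(F, 𝔑)` of `(K, 𝔐)`: an adelic structure on `F`
together with a map of places lying over the places of `K`, such that the places of
`F` over `v ∈ 𝔐` are exactly the absolute values of `F` extending `|·|_v`. -/
structure AdelicExtensionOf {K : Type} [Field K] (A : AdelicField K) (F : Type)
    [CommRing F] [Algebra K F] : Type 1 where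
  B : AdelicField F
  res : B.places → A.places
  compat : ∀ (w : B.places) (x : K), B.absv w (algebraMap K F x) = A.absv (res w) x
  fiber_surj : ∀ (v : A.places) (w' : AbsoluteValue F ℝ),
    (∀ x : K, w' (algebraMap K F x) = A.absv v x) →
    ∃ w : B.places, res w = v ∧ B.absv w = w'
  fiber_inj : ∀ w w' : B.places, res w = res w' → B.absv w = B.absv w' → w = w'

/-- The weights of an adelic field extension are given, via the Artinian decomposition
`F ⊗_K K_v ≅ ⊕_w E_w`, by `n_w = (dim_{K_v} E_w / [F : K]) · n_v`. -/
def AdelicExtensionOf.WeightSpec {K : Type} [Field K] {A : AdelicField K} {F : Type}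
    [CommRing F] [Algebra K F] (e : AdelicExtensionOf A F) : Prop :=
  ∀ (v : A.places) (Kv : Type) [Field Kv] [Algebra K Kv] (vext : AbsoluteValue Kv ℝ),
    (∀ x : K, vext (algebraMap K Kv x) = A.absv v x) →
    IsDenseEmbRange (algebraMap K Kv) vext → IsCauchyComplete vext →
    ∀ (D : ArtinDecomposition K F Kv
        (fun w : {w : e.B.places // e.res w = v} => e.B.absv w.1))
      (w : {w : e.B.places // e.res w = v}),
      e.B.weight w.1 =
        (Module.finrank Kv (D.E w) : ℝ) / (Module.finrank K F : ℝ) * A.weight v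

/-! ## Toric metrized divisors and heights of closed points of the torus -/

/-- The valuation vector `val_w(t) = (-log |t_i|_w)_i` of a tuple. -/
def valVec {F : Type} [CommRing F] {n : ℕ} (ab : AbsoluteValue F ℝ) (t : Fin n → F) :
    Fin n → ℝ := fun i => - Real.log (ab (t i))

/-- The character `χ^{e_i}` in `K[M]`. -/
def basisChar (K : Type) [CommRing K] {n : ℕ} (i : Fin n) : Laurent K n :=
  AddMonoidAlgebra.single (Pi.single i (1 : ℤ)) (1 : K)

/-- The coordinates of the closed point of the torus with maximal ideal `m`,
i.e. the images of the characters `χ^{e_i}` in the residue field `K[M]/m`. -/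
def torusCoord {K : Type} [CommRing K] {n : ℕ} (m : Ideal (Laurent K n)) (i : Fin n) :
    Laurent K n ⧸ m := Ideal.Quotient.mk m (basisChar K i)

/-- The global height of the closed point of the torus with (maximal) ideal `m`,
with respect to the nef toric metrized divisor determined by the polytope `Δ₀` and
the family of `v`-adic roof functions `θ v`, computed through an adelic field extension
of `(K, 𝔐)` to the residue field `K[M]/m`:
`h(p) = [κ(p):K] · ∑_w n_w · (-ψ_v(val_w(p)))` where `ψ_v` is the `v`-adic metric
function, i.e. the Legendre-Fenchel dual of the roof function `θ v`. -/
def toricPointHeight {K : Type} [Field K] {n : ℕ} (A : AdelicField K)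
    (Δ₀ : Set (Fin n → ℝ)) (θ : A.places → (Fin n → ℝ) → ℝ)
    (m : Ideal (Laurent K n)) (ext : AdelicExtensionOf A (Laurent K n ⧸ m)) : ℝ :=
  (Module.finrank K (Laurent K n ⧸ m) : ℝ) *
    ∑ᶠ w : ext.B.places, ext.B.weight w *
      (- metricFnOfRoof Δ₀ (θ (ext.res w)) (valVec (ext.B.absv w) (torusCoord m)))

/-- The standard simplex of `ℝ^n`, the polytope of the divisor of the hyperplane at
infinity of `ℙ^n`. -/
def stdSimplexSet (n : ℕ) : Set (Fin n → ℝ) :=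
  convexHull ℝ (insert 0 (Set.range fun i : Fin n => toRealVec (Pi.single i 1)))

/-- A polynomial viewed as a Laurent polynomial, i.e. a regular function on the torus
`𝔾_m^n ⊆ ℙ^n`. -/
def polyToLaurent (K : Type) [CommRing K] {n : ℕ} (g : MvPolynomial (Fin n) K) :
    Laurent K n :=
  MvPolynomial.aeval (fun i => basisChar K i) g

/-! ## Evaluation of Laurent polynomials at points of the torus -/

/-- The monoid homomorphism `M = ℤ^n → Lˣ` sending `m` to `x^m = ∏ x_i^{m_i}`. -/
def torusUnitsHom {L : Type} [CommRing L] {n : ℕ} (x : Fin n → Lˣ) :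
    Multiplicative (Fin n → ℤ) →* Lˣ :=
  MonoidHom.mk' (fun m => ∏ i, x i ^ (Multiplicative.toAdd m i))
    (by
      intro a b
      simp [toAdd_mul, Pi.add_apply, zpow_add, Finset.prod_mul_distrib])

/-- Evaluation of Laurent polynomials over `L` at a point `x ∈ 𝕋(L) = (Lˣ)^n`,
as an algebra homomorphism `L[M] → L`. -/
def laurentEvalHom {L : Type} [CommRing L] {n : ℕ} (x : Fin n → Lˣ) :
    Laurent L n →ₐ[L] L :=
  AddMonoidAlgebra.lift L L (Fin n → ℤ) ((Units.coeHom L).comp (torusUnitsHom x))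

/-- Evaluation at a point of the torus with coordinates in an extension `F` of `K`. -/
def laurentEvalExt {K F : Type} [CommRing K] [CommRing F] [Algebra K F] {n : ℕ}
    (x : Fin n → Fˣ) (f : Laurent K n) : F :=
  ∑ m ∈ f.coeff.support, algebraMap K F (f.coeff m) * ((∏ i, x i ^ (m i) : Fˣ) : F)

/-- Base change of a Laurent polynomial along `K → L`. -/
def laurentBaseChange {K : Type} [CommRing K] {n : ℕ} (L : Type) [CommRing L]
    [Algebra K L] (f : Laurent K n) : Laurent L n :=
  AddMonoidAlgebra.ofCoeff (Finsupp.mapRange (algebraMap K L) (map_zero _) f.coeff)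

/-- The point `x ∈ 𝕋(L) = (Lˣ)^n` is an isolated solution of the system `f = 0`:
it is a common zero of the `f_i` and the corresponding closed point is an isolated
point of the zero locus. -/
def isIsolatedSolution {L : Type} [Field L] {n : ℕ} (f : Fin n → Laurent L n)
    (x : Fin n → Lˣ) : Prop :=
  (∀ i, laurentEvalHom x (f i) = 0) ∧
  ∃ U : Set (PrimeSpectrum (Laurent L n)), IsOpen U ∧
    U ∩ PrimeSpectrum.zeroLocus (Set.range f) =
      {⟨RingHom.ker (laurentEvalHom x).toRingHom, RingHom.ker_isPrime _⟩}

/-! ## Local heights of cycles on a normal projective variety (abstract framework)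

The Berkovich-analytic ingredients (semipositive metrics, Monge-Ampère measures and
local heights of cycles) are not available in Mathlib; they are axiomatised here by a
structure recording, for a normal projective variety `X` over an adelic field
`(K, 𝔐)`, its groups of cycles, metrized divisors and their rational sections,
proper intersection, the intersection product `div(s)·Y`, the `v`-adic Monge-Ampère
integrals, and the inductively defined local heights. -/
structure HeightTheory (K : Type) [Field K] (A : AdelicField K) : Type 1 where
  /-- cycles of the normal projective variety `X` -/
  Cyc : Type
  [grp : AddCommGroup Cyc]
  /-- `Y` is a cycle of pure dimension `k` -/
  IsDim : Cyc → ℤ → Prop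
  /-- effective cycles -/
  Eff : Cyc → Prop
  /-- metrized divisors `D̄ = (D, (‖·‖_v)_v)` on `X` -/
  MDiv : Type
  /-- semipositive metrized divisors -/
  Semipos : MDiv → Prop
  /-- nef metrized divisors: `D` nef, `D̄` semipositive and `h_{D̄}(p) ≥ 0` for all
  closed points `p` -/
  Nef : MDiv → Prop
  /-- metrized divisors generated by small sections -/
  GenSmall : MDiv → Prop
  /-- rational sections of `O(D)` -/
  Sec : MDiv → Type
  /-- global sections -/
  IsGlobal : ∀ {D : MDiv}, Sec D → Prop
  /-- `D̄`-small global sections: `sup ‖s‖_v ≤ 1` for all `v` -/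
  Small : ∀ {D : MDiv}, Sec D → Prop
  small_global : ∀ {D : MDiv} (s : Sec D), Small s → IsGlobal s
  /-- the intersection `div(s) · Y` -/
  inter : ∀ {D : MDiv}, Sec D → Cyc → Cyc
  inter_dim : ∀ {D : MDiv} (s : Sec D) (Y : Cyc) (k : ℤ), IsDim Y k → IsDim (inter s Y) (k - 1)
  inter_eff : ∀ {D : MDiv} (s : Sec D) (Y : Cyc), IsGlobal s → Eff Y → Eff (inter s Y)
  /-- `div(s_0), …, div(s_{m-1})` intersect `Y` properly -/
  Proper : ∀ {m : ℕ}, (Fin m → Sigma Sec) → Cyc → Prop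
  /-- the local height `h_{D̄_0,…,D̄_{m-1},v}(Y; s_0,…,s_{m-1})` -/
  locH : ∀ {m : ℕ}, (Fin m → Sigma Sec) → Cyc → A.places → ℝ
  /-- the `v`-adic Monge-Ampère integral
  `∫ log‖s‖_v c₁(D̄_0) ∧ ⋯ ∧ c₁(D̄_{m-1}) ∧ δ_{Y_v}` -/
  MAint : ∀ {m : ℕ}, (Fin m → MDiv) → ∀ {D : MDiv}, Sec D → Cyc → A.places → ℝ
  /-- the inductive definition of local heights -/
  locH_rec : ∀ {m : ℕ} (fam : Fin (m + 1) → Sigma Sec) (Y : Cyc) (v : A.places),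
    locH fam Y v =
      locH (fun i : Fin m => fam i.castSucc) (inter (fam (Fin.last m)).2 Y) v -
        MAint (fun i : Fin m => (fam i.castSucc).1) (fam (Fin.last m)).2 Y v
  /-- the local heights of the zero cycle vanish -/
  locH_zero : ∀ {m : ℕ} (fam : Fin m → Sigma Sec) (v : A.places), locH fam 0 v = 0

attribute [instance] HeightTheory.grp

/-- The global height `h_{D̄_0,…,D̄_m}(Y) ∈ ℝ ∪ {±∞}` of a cycle, as the limit
(computed as a `limsup` over finite partial sums) of `∑_v n_v h_{...,v}(Y; s_•)`. -/
def HeightTheory.globalH {K : Type} [Field K] {A : AdelicField K} (T : HeightTheory K A)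
    {m : ℕ} (fam : Fin m → Sigma T.Sec) (Y : T.Cyc) : EReal :=
  Filter.limsup
    (fun S : Finset A.places => ((∑ v ∈ S, A.weight v * T.locH fam Y v : ℝ) : EReal))
    Filter.atTop

/-! ## Heights of 0-cycles attached to a metrized divisor (abstract framework) -/

/-- The data of a metrized divisor `D̄` on a normal projective variety `X` over an
adelic field, as far as `0`-cycles are concerned: the group of `0`-cycles of `X` and
the local heights `h_{D̄,v}(Y; s)` (with respect to a fixed rational section `s` of
`O(D)` regular and non-vanishing on the supports), which vanish for all but finitely
many places. -/
structure ZeroCycleHeightData (K : Type) [CommRing K] (A : AdelicField K) : Type 1 where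
  Cyc : Type
  [grp : AddCommGroup Cyc]
  locH : Cyc → A.places → ℝ
  locH_finite : ∀ Y : Cyc, {v : A.places | locH Y v ≠ 0}.Finite

attribute [instance] ZeroCycleHeightData.grp

/-- The global height `h_{D̄}(Y) = ∑_v n_v h_{D̄,v}(Y; s)` of a `0`-cycle. -/
def ZeroCycleHeightData.globalH {K : Type} [CommRing K] {A : AdelicField K}
    (H : ZeroCycleHeightData K A) (Y : H.Cyc) : ℝ :=
  ∑ᶠ v : A.places, A.weight v * H.locH Y v

/-! ## Intersection theory on a projective variety (abstract framework)

Cycles, Cartier divisors, sections, proper intersection and degrees on a (projective)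
variety over `K` are not available in Mathlib; they are axiomatised by the following
structure. -/
structure IntersectionTheory (K : Type) [Field K] : Type 1 where
  /-- the group of cycles of `X` -/
  Cyc : Type
  [grp : AddCommGroup Cyc]
  /-- `Y` is a cycle of pure dimension `k` -/
  IsDim : Cyc → ℤ → Prop
  /-- effective cycles -/
  Eff : Cyc → Prop
  /-- irreducible subvarieties, viewed as cycles -/
  Irred : Cyc → Prop
  /-- the closed points of `X`, with their Zariski topology -/
  Pt : Type
  [top : TopologicalSpace Pt]
  /-- a closed point as a 0-cycle -/
  pt : Pt → Cyc
  pt_dim : ∀ p, IsDim (pt p) 0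
  /-- the residue degree `[κ(p) : K]` -/
  resDeg : Pt → ℕ
  /-- the coefficient of a closed point in a 0-cycle -/
  coeff : Cyc → Pt → ℤ
  /-- the local ring `O_{p,X}` -/
  LocRing : Pt → Type
  [lrRing : ∀ p, CommRing (LocRing p)]
  [lrAlg : ∀ p, Algebra K (LocRing p)]
  /-- `X` is projective -/
  Projective : Prop
  /-- `X` is Cohen-Macaulay -/
  CohenMacaulay : Prop
  /-- `X` is of pure dimension `d` -/
  PureDim : ℕ → Prop
  /-- the dimension of `X` -/
  dimX : ℕ
  /-- the fundamental cycle `[X]` -/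
  fund : Cyc
  fund_dim : IsDim fund dimX
  fund_eff : Eff fund
  /-- Cartier divisors on `X` -/
  Div : Type
  /-- rational sections of `O(D)` -/
  Sec : Div → Type
  /-- global sections -/
  IsGlobal : ∀ {D : Div}, Sec D → Prop
  /-- a local defining function of `div(s)` at `p`, as a germ in `O_{p,X}` -/
  germ : ∀ {D : Div}, Sec D → ∀ p : Pt, LocRing p
  /-- the support `|div(s)|`, as a set of closed points -/
  SuppDiv : ∀ {D : Div}, Sec D → Set Pt
  /-- the intersection `div(s) · Y` -/
  inter : ∀ {D : Div}, Sec D → Cyc → Cyc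
  inter_dim : ∀ {D : Div} (s : Sec D) (Y : Cyc) (k : ℤ), IsDim Y k → IsDim (inter s Y) (k - 1)
  /-- `div(s_0), …, div(s_{m-1})` intersect `Y` properly -/
  Proper : ∀ {m : ℕ}, (Fin m → Sigma Sec) → Cyc → Prop
  /-- the degree of a 0-cycle: `deg(∑ m_p p) = ∑ m_p [κ(p) : K]` -/
  deg0 : Cyc → ℤ
  deg0_spec : ∀ Y : Cyc, IsDim Y 0 →
    (deg0 Y : ℝ) = ∑ᶠ p : Pt, (coeff Y p : ℝ) * (resDeg p : ℝ)
  /-- the degree `deg_{D_0,…,D_{m-1}}(Y)` of a cycle with respect to divisors -/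
  degD : ∀ {m : ℕ}, (Fin m → Div) → Cyc → ℤ
  degD_zero : ∀ (Ds : Fin 0 → Div) (Y : Cyc), degD Ds Y = deg0 Y
  /-- the inductive definition of degrees via divisors of rational sections meeting the
  cycle properly -/
  degD_rec : ∀ {m : ℕ} (fam : Fin (m + 1) → Sigma Sec) (Y : Cyc),
    Proper (fun _ : Fin 1 => fam (Fin.last m)) Y →
    degD (fun i : Fin (m + 1) => (fam i).1) Y =
      degD (fun i : Fin m => (fam i.castSucc).1) (inter (fam (Fin.last m)).2 Y)
  /-- 0-cycles are effective iff all their coefficients are nonnegative -/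
  eff_zero_iff : ∀ Y : Cyc, IsDim Y 0 → (Eff Y ↔ ∀ p, 0 ≤ coeff Y p)
  /-- a Cartier divisor is nef if it has nonnegative degree on every irreducible
  curve -/
  nef : Div → Prop
  nef_iff : ∀ D : Div, nef D ↔ ∀ C : Cyc, Irred C → IsDim C 1 → 0 ≤ degD ![D] C

attribute [instance] IntersectionTheory.grp IntersectionTheory.top
  IntersectionTheory.lrRing IntersectionTheory.lrAlg

/-- The iterated intersection product `div(s_0) ⋯ div(s_{m-1}) · X`. -/
def IntersectionTheory.iprod {K : Type} [Field K] (T : IntersectionTheory K)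
    {m : ℕ} (fam : Fin m → Sigma T.Sec) : T.Cyc :=
  (List.ofFn fam).foldr (fun s Y => T.inter s.2 Y) T.fund

/-- The metric function of the divisor `Ē` of the hyperplane at infinity of `ℙ^r_K`,
equipped with the `ℓ¹`-norm at Archimedean places and the canonical metric at
non-Archimedean ones (Proposition 5.2). -/
def psiProj {K : Type} [Field K] (A : AdelicField K) (v : A.places) {r : ℕ}
    (y : Fin r → ℝ) : ℝ :=
  if A.IsNonarch v then sInf (insert 0 (Set.range y))
  else - Real.log (1 + ∑ j, Real.exp (-(y j)))

/-- The metric function of the toric metrized divisor `D̄_{m,α}`: the homothecy by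
`|α₀|_v⁻¹` of the inverse image of `Ē` under the monomial map `φ_{m,α}` (formula
(5.4)). -/
def psiPullback {K : Type} [Field K] (A : AdelicField K) {n r : ℕ}
    (m : Fin (r + 1) → Fin n → ℤ) (a : Fin (r + 1) → Kˣ) (v : A.places)
    (u : Fin n → ℝ) : ℝ :=
  - Real.log (A.absv v ↑(a 0)) + (∑ i, ((m 0) i : ℝ) * u i) +
    psiProj A v (fun j : Fin r =>
      ((∑ i, ((m j.succ) i : ℝ) * u i) - (∑ i, ((m 0) i : ℝ) * u i)) -
        Real.log (A.absv v (↑(a j.succ) / ↑(a 0))))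

/-- The explicit formula for the `v`-adic metric function of `D̄_{m,α}` (formula
(5.6)). -/
def psiMonomial {K : Type} [Field K] (A : AdelicField K) (v : A.places) {n r : ℕ}
    (m : Fin (r + 1) → Fin n → ℤ) (a : Fin (r + 1) → Kˣ) (u : Fin n → ℝ) : ℝ :=
  if A.IsNonarch v then
    sInf (Set.range fun j : Fin (r + 1) =>
      (∑ i, (m j i : ℝ) * u i) - Real.log (A.absv v ↑(a j)))
  else
    - Real.log (∑ j : Fin (r + 1), A.absv v ↑(a j) * Real.exp (-(∑ i, (m j i : ℝ) * u i)))

/-- The convex coefficients expressing `x` as a convex combination of the exponents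
`m_j`. -/
def lambdaSet {n r : ℕ} (m : Fin (r + 1) → Fin n → ℤ) (x : Fin n → ℝ) :
    Set (Fin (r + 1) → ℝ) :=
  {l | (∀ j, 0 ≤ l j) ∧ (∑ j, l j) = 1 ∧ ∀ i, (∑ j, l j * (m j i : ℝ)) = x i}

/-- The explicit formula for the `v`-adic roof function of `D̄_{m,α}` (formula (5.7)). -/
def roofMonomial {K : Type} [Field K] (A : AdelicField K) (v : A.places) {n r : ℕ}
    (m : Fin (r + 1) → Fin n → ℤ) (a : Fin (r + 1) → Kˣ) (x : Fin n → ℝ) : ℝ :=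
  if A.IsNonarch v then
    sSup ((fun l : Fin (r + 1) → ℝ =>
      ∑ j, l j * Real.log (A.absv v ↑(a j))) '' lambdaSet m x)
  else
    sSup ((fun l : Fin (r + 1) → ℝ =>
      ∑ j, l j * Real.log (A.absv v ↑(a j) / l j)) '' lambdaSet m x)

/-!
Both `v`-adic metric functions are minima over the simplex of affine functions of `u`. At a
non-Archimedean place `min_j (⟨m_j, u⟩ - log |α_j|_v)` is the minimum over `λ` of
`∑ λ_j (⟨m_j, u⟩ - log |α_j|_v)`; at an Archimedean place `-log ∑ |α_j|_v e^{-⟨m_j, u⟩}` is, by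
Gibbs' variational principle, the minimum of the same expression minus the entropy
`∑ -λ_j log λ_j`. So `ψ(u) = min_λ (⟨∑ λ_j m_j, u⟩ - H(λ))` with `H` concave and continuous on
the simplex. This gives concavity, and the bound by each monomial (take `λ` a vertex). Let `θ` be
the maximum of `H` on the fibre `{λ | ∑ λ_j m_j = x}` over `x ∈ Δ`. Separating `(x, θ + ε)` by a
non-vertical hyperplane from the compact convex set `{(∑ λ_j m_j, t) | min H ≤ t ≤ H(λ)}` gives
a `u` with `⟨x, u⟩ - ψ(u) ≤ θ + ε`, so the Legendre dual of `ψ` at `x` is `θ`, the roof function.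
That `ψ` is the stated pull-back is a direct rewriting of the metric of the hyperplane at infinity.
-/

open Real Set

section Simplex

variable {ι : Type*} [Fintype ι]

lemma isLeast_sum_mul_stdSimplex [Nonempty ι] (z : ι → ℝ) :
    IsLeast ((fun l => ∑ j, l j * z j) '' stdSimplex ℝ ι) (sInf (range z)) := by
  obtain ⟨j₀, hj₀⟩ := Finite.exists_min z
  rw [(IsLeast.csInf_eq ⟨⟨j₀, rfl⟩, forall_mem_range.2 hj₀⟩ : sInf (range z) = z j₀)]
  refine ⟨⟨Pi.single j₀ 1, single_mem_stdSimplex ℝ j₀, by simp [Pi.single_apply]⟩, ?_⟩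
  rintro _ ⟨l, hl, rfl⟩
  calc z j₀ = ∑ j, l j * z j₀ := by rw [← Finset.sum_mul, hl.2, one_mul]
    _ ≤ ∑ j, l j * z j :=
      Finset.sum_le_sum fun j _ => mul_le_mul_of_nonneg_left (hj₀ j) (hl.1 j)

lemma mul_add_negMulLog_le {l : ℝ} (hl : 0 ≤ l) (t : ℝ) : l * t + negMulLog l ≤ exp t - l := by
  rcases hl.eq_or_lt with rfl | hl
  · simp [(exp_pos t).le]
  have h := log_le_sub_one_of_pos (div_pos (exp_pos t) hl)
  rw [log_div (exp_ne_zero t) hl.ne', log_exp] at h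
  have h' := mul_le_mul_of_nonneg_left h hl.le
  rw [mul_sub, mul_sub, mul_div_cancel₀ _ hl.ne', mul_one] at h'
  rw [negMulLog]
  linarith

/-- Gibbs' variational principle: the free energy `-log ∑ e^{-z_j}` is the minimum over the
simplex of the mean energy minus the entropy, attained at the Gibbs distribution. -/
lemma isLeast_sum_mul_sub_negMulLog_stdSimplex [Nonempty ι] (z : ι → ℝ) :
    IsLeast ((fun l => ∑ j, l j * z j - ∑ j, negMulLog (l j)) '' stdSimplex ℝ ι)
      (-log (∑ j, exp (-z j))) := by
  set Z := ∑ j, exp (-z j)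
  have hZ : 0 < Z := Finset.sum_pos (fun j _ => exp_pos _) Finset.univ_nonempty
  have hgibbs : ∑ j, exp (-z j - log Z) = 1 := by
    simp_rw [exp_sub, exp_log hZ, ← Finset.sum_div]
    exact div_self hZ.ne'
  refine ⟨⟨fun j => exp (-z j - log Z), ⟨fun j => (exp_pos _).le, hgibbs⟩, ?_⟩, ?_⟩
  · simp only [negMulLog, log_exp, ← Finset.sum_sub_distrib]
    calc ∑ j, (exp (-z j - log Z) * z j - -exp (-z j - log Z) * (-z j - log Z))
        = ∑ j, exp (-z j - log Z) * -log Z := Finset.sum_congr rfl fun j _ => by ring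
      _ = -log Z := by rw [← Finset.sum_mul, hgibbs, one_mul]
  · rintro _ ⟨l, hl, rfl⟩
    have h := Finset.sum_le_sum fun j (_ : j ∈ Finset.univ) =>
      mul_add_negMulLog_le (hl.1 j) (-z j - log Z)
    simp only [Finset.sum_add_distrib, Finset.sum_sub_distrib, hgibbs, hl.2, mul_sub,
      mul_neg, Finset.sum_neg_distrib, ← Finset.sum_mul, one_mul] at h
    linarith

lemma concaveOn_sum_negMulLog :
    ConcaveOn ℝ (stdSimplex ℝ ι) (fun l : ι → ℝ => ∑ j, negMulLog (l j)) := by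
  refine ⟨convex_stdSimplex ℝ ι, fun l hl l' hl' a b ha hb hab => ?_⟩
  simp only [smul_eq_mul, Finset.mul_sum, ← Finset.sum_add_distrib, Pi.add_apply, Pi.smul_apply]
  exact Finset.sum_le_sum fun j _ =>
    concaveOn_negMulLog.2 (mem_Ici.2 (hl.1 j)) (mem_Ici.2 (hl'.1 j)) ha hb hab

lemma exists_mem_stdSimplex_of_mem_convexHull_range {E : Type*} [AddCommGroup E] [Module ℝ E]
    {e : ι → E} {x : E} (hx : x ∈ convexHull ℝ (range e)) :
    ∃ l ∈ stdSimplex ℝ ι, ∑ j, l j • e j = x := by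
  have he : range e = Fintype.linearCombination ℝ e '' range fun j => Pi.single j 1 := by
    rw [← range_comp]
    simp [Function.comp_def, Fintype.linearCombination_apply_single]
  rw [he, ← LinearMap.image_convexHull, convexHull_rangle_single_eq_stdSimplex] at hx
  obtain ⟨l, hl, rfl⟩ := hx
  exact ⟨l, hl, (Fintype.linearCombination_apply ℝ e l).symm⟩

end Simplex

section Duality

variable {n : ℕ}

lemma exists_sub_dotProduct_lt_of_mem_of_notMem {D : Set ((Fin n → ℝ) × ℝ)} (hD : Convex ℝ D)
    (hDc : IsClosed D) {x : Fin n → ℝ} {t₀ t₁ : ℝ} (ht : t₀ < t₁) (h₀ : (x, t₀) ∈ D)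
    (h₁ : (x, t₁) ∉ D) : ∃ u : Fin n → ℝ, ∀ q ∈ D, q.2 - q.1 ⬝ᵥ u < t₁ - x ⬝ᵥ u := by
  obtain ⟨f, β, hlt, hgt⟩ := geometric_hahn_banach_closed_point hD hDc h₁
  set s := f (0, 1)
  set w : Fin n → ℝ := fun i => f (Pi.single i 1, 0)
  have hf : ∀ q : (Fin n → ℝ) × ℝ, f q = q.1 ⬝ᵥ w + q.2 * s := by
    rintro ⟨y, t⟩
    have hq : ((y, t) : (Fin n → ℝ) × ℝ) = ∑ i, y i • (Pi.single i 1, 0) + t • (0, 1) := by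
      ext i <;> simp [Prod.fst_sum, Prod.snd_sum, Finset.sum_apply, Pi.single_apply]
    rw [congrArg f hq, map_add, map_sum]
    simp only [map_smul, smul_eq_mul]
    simp [dotProduct, w, s]
  have h₀' := hlt _ h₀
  rw [hf] at h₀' hgt
  have hs : 0 < s := by
    dsimp only at h₀' hgt
    nlinarith
  refine ⟨-s⁻¹ • w, fun q hq => ?_⟩
  have hq' := hlt q hq
  rw [hf] at hq'
  dsimp only at hgt
  simp only [dotProduct_smul, smul_eq_mul]
  rw [← mul_lt_mul_iff_right₀ hs]
  field_simp
  linarith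

variable {ι : Type*} [Fintype ι]

def truncatedHypographImage (S : Set (ι → ℝ)) (H : (ι → ℝ) → ℝ) (e : ι → Fin n → ℝ) (c : ℝ) :
    Set ((Fin n → ℝ) × ℝ) :=
  {q | ∃ l ∈ S, ∑ j, l j • e j = q.1 ∧ c ≤ q.2 ∧ q.2 ≤ H l}

lemma convex_truncatedHypographImage {S : Set (ι → ℝ)} {H : (ι → ℝ) → ℝ} (hH : ConcaveOn ℝ S H)
    (e : ι → Fin n → ℝ) (c : ℝ) : Convex ℝ (truncatedHypographImage S H e c) := by
  rintro ⟨y, t⟩ ⟨l, hl, rfl, hct, htH⟩ ⟨y', t'⟩ ⟨l', hl', rfl, hct', htH'⟩ a b ha hb hab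
  refine ⟨a • l + b • l', hH.1 hl hl' ha hb hab, ?_, ?_, ?_⟩
  · simp [add_smul, mul_smul, Finset.sum_add_distrib, Finset.smul_sum]
  · show c ≤ a * t + b * t'
    linear_combination mul_le_mul_of_nonneg_left hct ha + mul_le_mul_of_nonneg_left hct' hb +
      - c * hab
  · show a * t + b * t' ≤ H (a • l + b • l')
    dsimp only at htH htH'
    have := hH.2 hl hl' ha hb hab
    simp only [smul_eq_mul] at this
    nlinarith

lemma isCompact_truncatedHypographImage {S : Set (ι → ℝ)} (hS : IsCompact S) {H : (ι → ℝ) → ℝ}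
    (hH : ContinuousOn H S) (e : ι → Fin n → ℝ) (c : ℝ) :
    IsCompact (truncatedHypographImage S H e c) := by
  obtain ⟨M, hM⟩ := hS.bddAbove_image hH
  set C := {p ∈ S ×ˢ Ici c | p.2 ≤ H p.1}
  have hC : IsCompact C := by
    refine (hS.prod (isCompact_Icc (a := c) (b := M))).of_isClosed_subset
      ((hS.isClosed.prod isClosed_Ici).isClosed_le continuous_snd.continuousOn
        (hH.comp continuous_fst.continuousOn fun p hp => hp.1)) ?_
    rintro ⟨l, t⟩ ⟨⟨hl, hct⟩, htH⟩
    exact ⟨hl, hct, htH.trans (hM ⟨l, hl, rfl⟩)⟩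
  have himage : truncatedHypographImage S H e c =
      (fun p : (ι → ℝ) × ℝ => (∑ j, p.1 j • e j, p.2)) '' C := by
    ext ⟨y, t⟩
    constructor
    · rintro ⟨l, hl, rfl, hct, htH⟩
      exact ⟨(l, t), ⟨⟨hl, hct⟩, htH⟩, rfl⟩
    · rintro ⟨⟨l, t⟩, ⟨⟨hl, hct⟩, htH⟩, hlt⟩
      obtain ⟨rfl, rfl⟩ := Prod.mk.inj hlt
      exact ⟨l, hl, rfl, hct, htH⟩
  rw [himage]
  exact hC.image (by fun_prop)

variable {S : Set (ι → ℝ)} {H : (ι → ℝ) → ℝ} {e : ι → Fin n → ℝ} {ψ : (Fin n → ℝ) → ℝ}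

lemma concaveOn_of_isGLB
    (hψ : ∀ u, IsGLB ((fun l => (∑ j, l j • e j) ⬝ᵥ u - H l) '' S) (ψ u)) :
    ConcaveOn ℝ univ ψ := by
  refine ⟨convex_univ, fun u _ w _ a b ha hb hab => (hψ _).2 ?_⟩
  rintro _ ⟨l, hl, rfl⟩
  have hu := mul_le_mul_of_nonneg_left ((hψ u).1 ⟨l, hl, rfl⟩) ha
  have hw := mul_le_mul_of_nonneg_left ((hψ w).1 ⟨l, hl, rfl⟩) hb
  simp only [dotProduct_add, dotProduct_smul, smul_eq_mul] at hu hw ⊢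
  linear_combination hu + hw - H l * hab

theorem legendreDualFn_eq_sSup_image (hS : IsCompact S) (hH : ConcaveOn ℝ S H)
    (hHc : ContinuousOn H S)
    (hψ : ∀ u, IsGLB ((fun l => (∑ j, l j • e j) ⬝ᵥ u - H l) '' S) (ψ u)) {x : Fin n → ℝ}
    (hx : ∃ l ∈ S, ∑ j, l j • e j = x) :
    legendreDualFn ψ x = sSup (H '' {l ∈ S | ∑ j, l j • e j = x}) := by
  have hF : IsCompact {l ∈ S | ∑ j, l j • e j = x} :=
    hS.inter_right (isClosed_eq (by fun_prop) continuous_const)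
  obtain ⟨l₁, hl₁, hmax⟩ := hF.exists_isMaxOn hx (hHc.mono fun l hl => hl.1)
  rw [IsGreatest.csSup_eq ⟨mem_image_of_mem H hl₁, forall_mem_image.2 hmax⟩]
  have hlower : ∀ u, H l₁ ≤ x ⬝ᵥ u - ψ u := fun u => by
    have := (hψ u).1 ⟨l₁, hl₁.1, rfl⟩
    dsimp only at this
    rw [hl₁.2] at this
    linarith
  have hupper : ∀ ε > 0, ∃ u, x ⬝ᵥ u - ψ u ≤ H l₁ + ε := by
    intro ε hε
    obtain ⟨l₀, hl₀, hmin⟩ := hS.exists_isMinOn ⟨l₁, hl₁.1⟩ hHc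
    obtain ⟨u, hu⟩ := exists_sub_dotProduct_lt_of_mem_of_notMem
      (convex_truncatedHypographImage hH e (H l₀))
      (isCompact_truncatedHypographImage hS hHc e (H l₀)).isClosed
      (lt_add_of_pos_right (H l₁) hε) ⟨l₁, hl₁.1, hl₁.2, hmin hl₁.1, le_rfl⟩
      fun ⟨l, hl, hlx, _, hle⟩ => (hle.trans (hmax ⟨hl, hlx⟩)).not_gt (by simpa using hε)
    refine ⟨u, ?_⟩
    suffices x ⬝ᵥ u - (H l₁ + ε) ≤ ψ u by linarith
    refine (hψ u).2 ?_
    rintro _ ⟨l, hl, rfl⟩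
    have := hu (∑ j, l j • e j, H l) ⟨l, hl, rfl, hmin hl, le_rfl⟩
    dsimp only at this ⊢
    linarith
  refine le_antisymm (le_of_forall_pos_le_add fun ε hε => ?_)
    (le_csInf (range_nonempty _) (forall_mem_range.2 hlower))
  obtain ⟨u, hu⟩ := hupper ε hε
  exact (csInf_le ⟨H l₁, forall_mem_range.2 hlower⟩ ⟨u, rfl⟩).trans hu

end Duality

lemma add_sInf_insert_zero_range_sub {r : ℕ} (z : Fin (r + 1) → ℝ) :
    z 0 + sInf (insert 0 (range fun j : Fin r => z j.succ - z 0)) = sInf (range z) := by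
  obtain ⟨j₀, hj₀⟩ := Finite.exists_min z
  rw [(IsLeast.csInf_eq ⟨⟨j₀, rfl⟩, forall_mem_range.2 hj₀⟩ : sInf (range z) = z j₀)]
  suffices IsLeast (insert 0 (range fun j : Fin r => z j.succ - z 0)) (z j₀ - z 0) by
    rw [this.csInf_eq]
    ring
  refine ⟨?_, ?_⟩
  · cases j₀ using Fin.cases with
    | zero =>
      rw [sub_self]
      exact mem_insert _ _
    | succ j => exact mem_insert_of_mem _ ⟨j, rfl⟩
  · rintro _ (rfl | ⟨j, rfl⟩)
    · linarith [hj₀ 0]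
    · linarith [hj₀ j.succ]

lemma add_neg_log_one_add_sum_exp {r : ℕ} (z : Fin (r + 1) → ℝ) :
    z 0 + -log (1 + ∑ j : Fin r, exp (-(z j.succ - z 0))) = -log (∑ j, exp (-z j)) := by
  have hsum : ∑ j, exp (-z j) = exp (-z 0) * (1 + ∑ j : Fin r, exp (-(z j.succ - z 0))) := by
    rw [Fin.sum_univ_succ, mul_add, mul_one, Finset.mul_sum]
    congr 1
    refine Finset.sum_congr rfl fun j _ => ?_
    rw [← exp_add]
    ring_nf
  have hpos : 0 < 1 + ∑ j : Fin r, exp (-(z j.succ - z 0)) := by positivity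
  rw [hsum, log_mul (exp_ne_zero _) hpos.ne', log_exp]
  ring

lemma exp_sInf_range_neg_log {ι : Type*} [Finite ι] [Nonempty ι] {W : ι → ℝ}
    (hW : ∀ j, 0 < W j) : exp (sInf (range fun j => -log (W j))) = (sSup (range W))⁻¹ := by
  obtain ⟨j₀, hj₀⟩ := Finite.exists_max W
  have hsup : sSup (range W) = W j₀ :=
    IsGreatest.csSup_eq ⟨⟨j₀, rfl⟩, forall_mem_range.2 hj₀⟩
  have hinf : sInf (range fun j => -log (W j)) = -log (W j₀) :=
    IsLeast.csInf_eq ⟨⟨j₀, rfl⟩, forall_mem_range.2 fun j =>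
      neg_le_neg (log_le_log (hW j) (hj₀ j))⟩
  rw [hsup, hinf, exp_neg, exp_log (hW j₀)]

section MonomialMap

variable {K : Type} [Field K] (A : AdelicField K) (v : A.places) {n r : ℕ}
  (m : Fin (r + 1) → Fin n → ℤ) (a : Fin (r + 1) → Kˣ)

/-- `-log |α_j χ^{m_j}(p)|_v`, written as a function of `u = val_v(p)`. -/
def monomialValuation (u : Fin n → ℝ) (j : Fin (r + 1)) : ℝ :=
  (∑ i, (m j i : ℝ) * u i) - log (A.absv v (a j))

/-- The concave function on the simplex whose push-forward to `Δ` along `l ↦ ∑ lⱼ mⱼ` is the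
roof function. -/
def monomialRoofFn (l : Fin (r + 1) → ℝ) : ℝ :=
  ∑ j, l j * log (A.absv v (a j)) + if A.IsNonarch v then 0 else ∑ j, negMulLog (l j)

lemma psiMonomial_eq (u : Fin n → ℝ) :
    psiMonomial A v m a u = if A.IsNonarch v then sInf (range (monomialValuation A v m a u))
      else -log (∑ j, exp (-monomialValuation A v m a u j)) := by
  unfold psiMonomial
  split_ifs
  · rfl
  · congr 2
    refine Finset.sum_congr rfl fun j _ => ?_
    rw [monomialValuation, neg_sub, exp_sub, exp_log ((A.absv v).pos (a j).ne_zero), exp_neg,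
      div_eq_mul_inv]

lemma psiPullback_eq_psiMonomial (u : Fin n → ℝ) :
    psiPullback A m a v u = psiMonomial A v m a u := by
  set z := monomialValuation A v m a u
  have hc : ∀ j, A.absv v (a j) ≠ 0 := fun j => ((A.absv v).pos (a j).ne_zero).ne'
  have hy : (fun j : Fin r => ((∑ i, (m j.succ i : ℝ) * u i) - ∑ i, (m 0 i : ℝ) * u i) -
      log (A.absv v ((a j.succ : K) / a 0))) = fun j => z j.succ - z 0 := by
    funext j
    rw [map_div₀, log_div (hc _) (hc _)]
    simp only [z, monomialValuation]
    ring
  have hz : psiPullback A m a v u = z 0 + psiProj A v fun j => z j.succ - z 0 := by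
    rw [psiPullback, hy]
    congr 1
    simp only [z, monomialValuation]
    ring
  rw [hz, psiProj, psiMonomial_eq]
  split_ifs
  · exact add_sInf_insert_zero_range_sub z
  · exact add_neg_log_one_add_sum_exp z

lemma isLeast_psiMonomial (u : Fin n → ℝ) :
    IsLeast ((fun l => (∑ j, l j • toRealVec (m j)) ⬝ᵥ u - monomialRoofFn A v a l) ''
      stdSimplex ℝ (Fin (r + 1))) (psiMonomial A v m a u) := by
  have hexpr : (fun l => (∑ j, l j • toRealVec (m j)) ⬝ᵥ u - monomialRoofFn A v a l) =
      fun l => ∑ j, l j * monomialValuation A v m a u j -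
        if A.IsNonarch v then 0 else ∑ j, negMulLog (l j) := by
    funext l
    simp only [sum_dotProduct, smul_dotProduct, smul_eq_mul]
    simp only [dotProduct, toRealVec, monomialRoofFn, monomialValuation, mul_sub,
      Finset.sum_sub_distrib]
    ring
  rw [hexpr, psiMonomial_eq]
  split_ifs
  · simpa using isLeast_sum_mul_stdSimplex (monomialValuation A v m a u)
  · exact isLeast_sum_mul_sub_negMulLog_stdSimplex (monomialValuation A v m a u)

lemma concaveOn_monomialRoofFn :
    ConcaveOn ℝ (stdSimplex ℝ (Fin (r + 1))) (monomialRoofFn A v a) := by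
  have hlin : ConcaveOn ℝ (stdSimplex ℝ (Fin (r + 1)))
      fun l : Fin (r + 1) → ℝ => ∑ j, l j * log (A.absv v (a j)) :=
    ⟨convex_stdSimplex ℝ _, fun l _ l' _ a b _ _ _ => le_of_eq (by
      simp only [smul_eq_mul, Pi.add_apply, Pi.smul_apply, Finset.mul_sum, add_mul,
        Finset.sum_add_distrib, mul_assoc])⟩
  refine hlin.add ?_
  split_ifs
  · exact concaveOn_const 0 (convex_stdSimplex ℝ _)
  · exact concaveOn_sum_negMulLog

lemma continuous_monomialRoofFn : Continuous (monomialRoofFn A v a) := by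
  unfold monomialRoofFn
  split_ifs <;> fun_prop

lemma monomialRoofFn_single (j : Fin (r + 1)) :
    monomialRoofFn A v a (Pi.single j 1) = log (A.absv v (a j)) := by
  simp [monomialRoofFn, Pi.single_apply, apply_ite negMulLog]

lemma psiMonomial_le_monomialValuation (u : Fin n → ℝ) (j : Fin (r + 1)) :
    psiMonomial A v m a u ≤ monomialValuation A v m a u j := by
  have h := (isLeast_psiMonomial A v m a u).2 ⟨Pi.single j 1, single_mem_stdSimplex ℝ j, rfl⟩
  dsimp only at h
  rw [monomialRoofFn_single] at h
  simp only [Pi.single_apply, ite_smul, one_smul, zero_smul, Finset.sum_ite_eq', Finset.mem_univ,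
    if_true] at h
  exact h

lemma lambdaSet_eq (x : Fin n → ℝ) :
    lambdaSet m x = {l ∈ stdSimplex ℝ (Fin (r + 1)) | ∑ j, l j • toRealVec (m j) = x} := by
  ext l
  simp [lambdaSet, stdSimplex, funext_iff, Finset.sum_apply, toRealVec, and_assoc]

lemma roofMonomial_eq (x : Fin n → ℝ) :
    roofMonomial A v m a x = sSup (monomialRoofFn A v a ''
      {l ∈ stdSimplex ℝ (Fin (r + 1)) | ∑ j, l j • toRealVec (m j) = x}) := by
  rw [roofMonomial, lambdaSet_eq]
  split_ifs with hv <;> refine congrArg sSup (image_congr fun l hl => ?_)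
  · simp [monomialRoofFn, hv]
  · simp only [monomialRoofFn, hv, if_false, ← Finset.sum_add_distrib]
    refine Finset.sum_congr rfl fun j _ => ?_
    rcases (hl.1.1 j).eq_or_lt with h | h
    · simp [← h]
    · rw [log_div ((A.absv v).pos (a j).ne_zero).ne' h.ne', negMulLog]
      ring

lemma monomialValuation_valVec {F : Type} [Field F] [Algebra K F] (W : AbsoluteValue F ℝ)
    (hW : ∀ x : K, W (algebraMap K F x) = A.absv v x) (p : Fin n → Fˣ) (j : Fin (r + 1)) :
    monomialValuation A v m a (valVec W fun i => (p i : F)) j =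
      -log (W (algebraMap K F (a j) * ((∏ i, p i ^ m j i : Fˣ) : F))) := by
  have hp : ∀ i, W (p i : F) ≠ 0 := fun i => (W.pos (p i).ne_zero).ne'
  rw [map_mul, hW, log_mul ((A.absv v).pos (a j).ne_zero).ne' (W.pos (Units.ne_zero _)).ne',
    Units.coe_prod, map_prod, log_prod fun i _ => by simpa [map_zpow₀] using zpow_ne_zero _ (hp i)]
  simp [monomialValuation, valVec, map_zpow₀, log_zpow]
  ring

lemma exp_psiMonomial_valVec {F : Type} [Field F] [Algebra K F] (W : AbsoluteValue F ℝ)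
    (hW : ∀ x : K, W (algebraMap K F x) = A.absv v x) (p : Fin n → Fˣ) :
    exp (psiMonomial A v m a (valVec W fun i => (p i : F))) =
      (if A.IsNonarch v then
        sSup (range fun j => W (algebraMap K F (a j) * ((∏ i, p i ^ m j i : Fˣ) : F)))
      else ∑ j, W (algebraMap K F (a j) * ((∏ i, p i ^ m j i : Fˣ) : F)))⁻¹ := by
  have hpos : ∀ j, 0 < W (algebraMap K F (a j) * ((∏ i, p i ^ m j i : Fˣ) : F)) := fun j =>
    W.pos (mul_ne_zero ((map_ne_zero _).2 (a j).ne_zero) (Units.ne_zero _))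
  rw [psiMonomial_eq, funext (monomialValuation_valVec A v m a W hW p)]
  split_ifs
  · exact exp_sInf_range_neg_log hpos
  · simp only [neg_neg]
    rw [Finset.sum_congr rfl fun j _ => exp_log (hpos j), exp_neg,
      exp_log (Finset.sum_pos (fun j _ => hpos j) Finset.univ_nonempty)]

end MonomialMap

theorem toric_metrized_divisor_of_monomial_map_general
    (K : Type) [Field K] (A : AdelicField K)
    {n r : ℕ} (m : Fin (r + 1) → Fin n → ℤ) (a : Fin (r + 1) → Kˣ) :
    (∀ v, ConcaveOn ℝ Set.univ (psiPullback A m a v)) ∧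
    (∀ (v : A.places) (u : Fin n → ℝ) (j : Fin (r + 1)),
      psiPullback A m a v u ≤ (∑ i, (m j i : ℝ) * u i) - Real.log (A.absv v ↑(a j))) ∧
    (∀ (F : Type) [Field F] [Algebra K F] [FiniteDimensional K F]
      (ext : AdelicExtensionOf A F), ext.WeightSpec →
      ∀ (w : ext.B.places) (p : Fin n → Fˣ),
        Real.exp (psiPullback A m a (ext.res w)
            (valVec (ext.B.absv w) fun i => ((p i : F)))) =
          (if A.IsNonarch (ext.res w) then
            sSup (Set.range fun j : Fin (r + 1) =>
              ext.B.absv w (algebraMap K F ↑(a j) * ((∏ i, p i ^ m j i : Fˣ) : F)))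
          else
            ∑ j : Fin (r + 1),
              ext.B.absv w (algebraMap K F ↑(a j) * ((∏ i, p i ^ m j i : Fˣ) : F)))⁻¹) ∧
    (∀ (v : A.places) (u : Fin n → ℝ), psiPullback A m a v u = psiMonomial A v m a u) ∧
    (∀ (v : A.places) (x : Fin n → ℝ),
      x ∈ convexHull ℝ (Set.range fun j => toRealVec (m j)) →
      legendreDualFn (psiPullback A m a v) x = roofMonomial A v m a x) := by
  have hpsi v : psiPullback A m a v = psiMonomial A v m a :=
    funext (psiPullback_eq_psiMonomial A v m a)
  have hglb v u := (isLeast_psiMonomial A v m a u).isGLB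
  refine ⟨fun v => ?_, fun v u j => ?_, fun F _ _ _ ext _ w p => ?_, fun v u => ?_,
    fun v x hx => ?_⟩
  · exact hpsi v ▸ concaveOn_of_isGLB (hglb v)
  · exact hpsi v ▸ psiMonomial_le_monomialValuation A v m a u j
  · exact hpsi _ ▸ exp_psiMonomial_valVec A _ m a _ (ext.compat w) p
  · exact psiPullback_eq_psiMonomial A v m a u
  · rw [hpsi, roofMonomial_eq, legendreDualFn_eq_sSup_image (isCompact_stdSimplex ℝ _)
      (concaveOn_monomialRoofFn A v a) (continuous_monomialRoofFn A v a).continuousOn (hglb v)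
      (exists_mem_stdSimplex_of_mem_convexHull_range hx)]

/-- **The toric metrized divisor `D̄_{m,α}`** (Proposition 5.10).  Let `(K, 𝔐)` be an
adelic field satisfying the product formula, `m ∈ M^{r+1}`, `α ∈ (K^×)^{r+1}`, and let
`D̄ = D̄_{m,α}` be the toric metrized divisor on a projective toric variety compatible
with `Δ = conv(m₀,…,m_r)`, whose `v`-adic metric is the homothecy by `|α₀|_v⁻¹` of the
inverse image, under the monomial map `φ_{m,α}`, of the `ℓ¹`/canonical metric on the
hyperplane divisor of `ℙ^r_K`; `D̄` is encoded by its metric functions `psiPullback`.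
Then: (1) `D̄` is semipositive (all metric functions are concave); (2) `D̄` is generated
by small sections — the monomial global sections `α_j χ^{m_j} s_D` (whose exponents span
`Δ`) are `D̄`-small; (3) the `v`-adic metric satisfies
`‖s_D(p)‖_v = (∑_j |α_j χ^{m_j}(p)|_v)⁻¹` (Archimedean `v`) resp.
`(max_j |α_j χ^{m_j}(p)|_v)⁻¹` (non-Archimedean `v`) at every point `p` of the torus
over any adelic extension; (4) the `v`-adic metric function is given by `psiMonomial`;
and (5) the `v`-adic roof function is given by `roofMonomial` on `Δ`. -/
theorem toric_metrized_divisor_of_monomial_map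
    (K : Type) [Field K] [Infinite K] (A : AdelicField K) (hpf : A.ProductFormula)
    {n r : ℕ} (m : Fin (r + 1) → Fin n → ℤ) (a : Fin (r + 1) → Kˣ) :
    (∀ v, ConcaveOn ℝ Set.univ (psiPullback A m a v)) ∧
    (∀ (v : A.places) (u : Fin n → ℝ) (j : Fin (r + 1)),
      psiPullback A m a v u ≤ (∑ i, (m j i : ℝ) * u i) - Real.log (A.absv v ↑(a j))) ∧
    (∀ (F : Type) [Field F] [Algebra K F] [FiniteDimensional K F]
      (ext : AdelicExtensionOf A F), ext.WeightSpec →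
      ∀ (w : ext.B.places) (p : Fin n → Fˣ),
        Real.exp (psiPullback A m a (ext.res w)
            (valVec (ext.B.absv w) fun i => ((p i : F)))) =
          (if A.IsNonarch (ext.res w) then
            sSup (Set.range fun j : Fin (r + 1) =>
              ext.B.absv w (algebraMap K F ↑(a j) * ((∏ i, p i ^ m j i : Fˣ) : F)))
          else
            ∑ j : Fin (r + 1),
              ext.B.absv w (algebraMap K F ↑(a j) * ((∏ i, p i ^ m j i : Fˣ) : F)))⁻¹) ∧
    (∀ (v : A.places) (u : Fin n → ℝ), psiPullback A m a v u = psiMonomial A v m a u) ∧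
    (∀ (v : A.places) (x : Fin n → ℝ),
      x ∈ convexHull ℝ (Set.range fun j => toRealVec (m j)) →
      legendreDualFn (psiPullback A m a v) x = roofMonomial A v m a x) :=
  toric_metrized_divisor_of_monomial_map_general K A m a

end
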